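/- arXiv:1709.03589 — 2 statements merged into one kernel-verified Lean document; each statement's English description precedes it below -/
import Mathlib

section
/- Let V be an n-dimensional real vector space and let (F,G,H) be a transverse triple of complete flags in V. Then the family of eruption endomorphisms {A^{i,j,k}_{F,G,H} : i,j,k integers with i,j,k ≥ 1 and i+j+k = n}, indexed by the (n−1)(n−2)/2 such triples (i,j,k), is linearly independent in the space of linear endomorphisms of V. -/
/-- `F` is a complete flag in an `n`-dimensional real vector space:
`F 0 ⊆ F 1 ⊆ ⋯ ⊆ F n` with `dim (F l) = l` for `0 ≤ l ≤ n`. -/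
def IsFlag (n : ℕ) {V : Type*} [AddCommGroup V] [Module ℝ V]
    (F : ℕ → Submodule ℝ V) : Prop :=
  (∀ l, l < n → F l ≤ F (l + 1)) ∧ ∀ l, l ≤ n → Module.finrank ℝ (F l) = l

/-- A triple of flags is transverse if `F a + G b + H c = V` whenever `a + b + c = n`. -/
def TransverseTriple (n : ℕ) {V : Type*} [AddCommGroup V] [Module ℝ V]
    (F G H : ℕ → Submodule ℝ V) : Prop :=
  ∀ a b c : ℕ, a + b + c = n → F a ⊔ G b ⊔ H c = ⊤

/-- A pair of flags is transverse if `F a + G (n - a) = V` for all `0 ≤ a ≤ n`. -/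
def TransversePair (n : ℕ) {V : Type*} [AddCommGroup V] [Module ℝ V]
    (F G : ℕ → Submodule ℝ V) : Prop :=
  ∀ a, a ≤ n → F a ⊔ G (n - a) = ⊤

/-- `A` is the `(i,j,k)`-eruption endomorphism of the triple `(F,G,H)`: it acts as the
scalar `(n - i)/n` on `F i` and as the scalar `-i/n` on `G j + H k`. -/
def IsEruption (n i j k : ℕ) {V : Type*} [AddCommGroup V] [Module ℝ V]
    (F G H : ℕ → Submodule ℝ V) (A : Module.End ℝ V) : Prop :=
  (∀ v ∈ F i, A v = (((n : ℝ) - (i : ℝ)) / (n : ℝ)) • v) ∧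
  (∀ v ∈ G j ⊔ H k, A v = (-(i : ℝ) / (n : ℝ)) • v)

/-- `A` is the `(i, n-i)`-shearing endomorphism of the pair `(F,G)`: it acts as the
scalar `(n - i)/n` on `F i` and as the scalar `-i/n` on `G (n - i)`. -/
def IsShearing (n i : ℕ) {V : Type*} [AddCommGroup V] [Module ℝ V]
    (F G : ℕ → Submodule ℝ V) (A : Module.End ℝ V) : Prop :=
  (∀ v ∈ F i, A v = (((n : ℝ) - (i : ℝ)) / (n : ℝ)) • v) ∧
  (∀ v ∈ G (n - i), A v = (-(i : ℝ) / (n : ℝ)) • v)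

/-! Up to the shift `A ↦ A + (i/n)·id`, `A^{i,j,k}` is the projection onto `F i` along
`G j + H k`. Transversality at `(i-1, j+1, k)` and a dimension count show that `G (j+1)` is not
contained in the proper subspace `F (i-1) + G j + H k`. A vector `v ∈ G (j+1)` outside it and a
functional `φ` vanishing on it give `φ((A^{a,b,c} + (a/n)·id) v) = 0` whenever `a < i`, or `a = i`
and `b > j`, but not for `(a,b,c) = (i,j,k)`. The shift is removed with a vector of `G 1`, an
eigenvector of every `A^{a,b,c}` for the eigenvalue `-a/n`. So the `A^{i,j,k}` are triangular for
the lexicographic order on `(i, -j)`, hence linearly independent. -/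

theorem LinearIndependent.of_exists_dual_triangular {ι κ R M : Type*} [CommRing R]
    [NoZeroDivisors R] [AddCommGroup M] [Module R M] [LinearOrder κ] {v : ι → M} (key : ι → κ)
    (hkey : Function.Injective key)
    (h : ∀ i, ∃ f : M →ₗ[R] R, f (v i) ≠ 0 ∧ ∀ j, key j < key i → f (v j) = 0) :
    LinearIndependent R v := by
  classical
  rw [linearIndependent_iff]
  intro l hl
  by_contra hl0
  obtain ⟨p, hp, hmax⟩ := l.support.exists_max_image key (Finsupp.support_nonempty_iff.mpr hl0)
  obtain ⟨f, hfp, hlower⟩ := h p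
  have hsum : l.sum (fun q c => c * f (v q)) = 0 := by
    simpa [Finsupp.linearCombination_apply, map_finsuppSum] using congrArg f hl
  rw [Finsupp.sum, Finset.sum_eq_single_of_mem p hp fun q hq hqp =>
    by rw [hlower q (lt_of_le_of_ne (hmax q hq) (hkey.ne hqp)), mul_zero]] at hsum
  exact mul_ne_zero (Finsupp.mem_support_iff.mp hp) hfp hsum

theorem Module.End.exists_dual_apply_eq_apply_add_smul {K M : Type*} [Field K] [AddCommGroup M]
    [Module K M] {u : M} (hu : u ≠ 0) (φ : Module.Dual K M) (v : M) :
    ∃ Λ : Module.Dual K (Module.End K M),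
      ∀ (T : Module.End K M) (μ : K), T u = -μ • u → Λ T = φ (T v + μ • v) := by
  obtain ⟨χ, hχ⟩ := Module.Projective.exists_dual_eq_one K hu
  refine ⟨φ ∘ₗ LinearMap.applyₗ v - φ v • (χ ∘ₗ LinearMap.applyₗ u), fun T μ hT => ?_⟩
  simp only [LinearMap.sub_apply, LinearMap.smul_apply, LinearMap.coe_comp, Function.comp_apply,
    LinearMap.applyₗ_apply_apply, hT, map_smul, map_add, hχ, smul_eq_mul]
  ring

section Flags

variable {V : Type*} [AddCommGroup V] [Module ℝ V] {n : ℕ} {F G H : ℕ → Submodule ℝ V}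

theorem IsFlag.mono (hF : IsFlag n F) {a b : ℕ} (hab : a ≤ b) (hb : b ≤ n) : F a ≤ F b :=
  monotoneOn_of_le_succ (s := Set.Iic n) Set.ordConnected_Iic
    (fun l _ _ hl => hF.1 l (Order.succ_le_iff.mp hl)) (hab.trans hb) hb hab

theorem IsEruption.apply_add_smul_self {i j k : ℕ} {A : Module.End ℝ V}
    (hA : IsEruption n i j k F G H A) (hn : n ≠ 0) {x w : V} (hx : x ∈ F i)
    (hw : w ∈ G j ⊔ H k) : A (x + w) + ((i : ℝ) / n) • (x + w) = x := by
  have hn : (n : ℝ) ≠ 0 := Nat.cast_ne_zero.mpr hn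
  rw [map_add, hA.1 x hx, hA.2 w hw]
  match_scalars <;> field_simp <;> ring

theorem TransverseTriple.not_le_sup [FiniteDimensional ℝ V] (hV : Module.finrank ℝ V = n)
    (hF : IsFlag n F) (hG : IsFlag n G) (hH : IsFlag n H) (hFGH : TransverseTriple n F G H)
    {i j k : ℕ} (hi : 1 ≤ i) (hijk : i + j + k = n) :
    ¬ G (j + 1) ≤ F (i - 1) ⊔ (G j ⊔ H k) := by
  intro hle
  have htop : F (i - 1) ⊔ (G j ⊔ H k) = ⊤ := by
    refine top_le_iff.mp ((hFGH (i - 1) (j + 1) k (by omega)).symm.le.trans ?_)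
    exact sup_le (sup_le le_sup_left hle) (le_sup_right.trans le_sup_right)
  have hdim := Submodule.finrank_add_le_finrank_add_finrank (F (i - 1)) (G j ⊔ H k)
  have hdim' := Submodule.finrank_add_le_finrank_add_finrank (G j) (H k)
  rw [htop, finrank_top, hV, hF.2 _ (by omega)] at hdim
  rw [hG.2 _ (by omega), hH.2 _ (by omega)] at hdim'
  omega

theorem TransverseTriple.exists_dual_eruption_triangular [FiniteDimensional ℝ V]
    (hV : Module.finrank ℝ V = n) (hF : IsFlag n F) (hG : IsFlag n G) (hH : IsFlag n H)
    (hFGH : TransverseTriple n F G H) {A : ℕ → ℕ → ℕ → Module.End ℝ V}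
    (hA : ∀ a b c : ℕ, 1 ≤ a → 1 ≤ b → 1 ≤ c → a + b + c = n →
      IsEruption n a b c F G H (A a b c))
    {i j k : ℕ} (hi : 1 ≤ i) (hj : 1 ≤ j) (hk : 1 ≤ k) (hijk : i + j + k = n) :
    ∃ Λ : Module.End ℝ V →ₗ[ℝ] ℝ, Λ (A i j k) ≠ 0 ∧
      ∀ a b c, 1 ≤ a → 1 ≤ b → 1 ≤ c → a + b + c = n → (a < i ∨ a = i ∧ j < b) →
        Λ (A a b c) = 0 := by
  have hn : n ≠ 0 := by omega
  have mem_sup_top : ∀ {a b c}, a + b + c = n → ∀ v, v ∈ F a ⊔ (G b ⊔ H c) := fun h v => by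
    rw [← sup_assoc, hFGH _ _ _ h]; exact Submodule.mem_top
  obtain ⟨v, hvG, hvD⟩ := SetLike.not_le_iff_exists.mp (hFGH.not_le_sup hV hF hG hH hi hijk)
  obtain ⟨φ, hφv, hφD⟩ := Submodule.exists_dual_map_eq_bot_of_notMem hvD inferInstance
  have hφ : ∀ y ∈ F (i - 1) ⊔ (G j ⊔ H k), φ y = 0 := fun y hy =>
    LinearMap.mem_ker.mp (LinearMap.le_ker_iff_map.mpr hφD hy)
  obtain ⟨u, huG, hu0⟩ := Submodule.exists_mem_ne_zero_of_ne_bot fun h => one_ne_zero <|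
    (hG.2 1 (by omega)).symm.trans (Submodule.finrank_eq_zero.mpr h)
  obtain ⟨Λ, hΛ'⟩ := Module.End.exists_dual_apply_eq_apply_add_smul hu0 φ v
  have hΛ : ∀ a b c, 1 ≤ a → 1 ≤ b → 1 ≤ c → a + b + c = n →
      Λ (A a b c) = φ (A a b c v + ((a : ℝ) / n) • v) := by
    intro a b c ha hb hc habc
    refine hΛ' _ _ ?_
    rw [← neg_div]
    exact (hA a b c ha hb hc habc).2 u (Submodule.mem_sup_left (hG.mono hb (by omega) huG))
  refine ⟨Λ, ?_, fun a b c ha hb hc habc hlt => ?_⟩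
  · obtain ⟨x, hx, w, hw, rfl⟩ := Submodule.mem_sup.mp (mem_sup_top hijk v)
    rw [hΛ i j k hi hj hk hijk, (hA i j k hi hj hk hijk).apply_add_smul_self hn hx hw]
    have hφw : φ w = 0 := hφ w (Submodule.mem_sup_right hw)
    rwa [map_add, hφw, add_zero] at hφv
  rw [hΛ a b c ha hb hc habc]
  rcases hlt with hai | ⟨rfl, hjb⟩
  · obtain ⟨y, hy, z, hz, hyz⟩ := Submodule.mem_sup.mp (mem_sup_top habc v)
    rw [← hyz, (hA a b c ha hb hc habc).apply_add_smul_self hn hy hz,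
      hφ y (Submodule.mem_sup_left (hF.mono (by omega) (by omega) hy))]
  · have hv : A a b c v = (-(a : ℝ) / n) • v :=
      (hA a b c ha hb hc habc).2 v (Submodule.mem_sup_left (hG.mono hjb (by omega) hvG))
    rw [hv, ← add_smul, neg_div, neg_add_cancel, zero_smul, map_zero]

end Flags

theorem statement4 (n : ℕ) (V : Type*) [AddCommGroup V] [Module ℝ V] [FiniteDimensional ℝ V]
    (hV : Module.finrank ℝ V = n)
    (F G H : ℕ → Submodule ℝ V) (hF : IsFlag n F) (hG : IsFlag n G) (hH : IsFlag n H)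
    (hFGH : TransverseTriple n F G H)
    (A : ℕ → ℕ → ℕ → Module.End ℝ V)
    (hA : ∀ i j k : ℕ, 1 ≤ i → 1 ≤ j → 1 ≤ k → i + j + k = n →
      IsEruption n i j k F G H (A i j k)) :
    LinearIndependent ℝ
      (fun p : {p : ℕ × ℕ × ℕ // 1 ≤ p.1 ∧ 1 ≤ p.2.1 ∧ 1 ≤ p.2.2 ∧ p.1 + p.2.1 + p.2.2 = n} =>
        A p.1.1 p.1.2.1 p.1.2.2) := by
  refine .of_exists_dual_triangular (fun p => toLex (p.1.1, OrderDual.toDual p.1.2.1)) ?_ ?_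
  · intro ⟨⟨a, b, c⟩, _, _, _, habc⟩ ⟨⟨a', b', c'⟩, _, _, _, habc'⟩ h
    simp only [toLex_inj, Prod.mk.injEq, OrderDual.toDual_inj] at h habc habc'
    obtain ⟨rfl, rfl⟩ := h
    obtain rfl : c = c' := by omega
    rfl
  · rintro ⟨⟨i, j, k⟩, hi, hj, hk, hijk⟩
    obtain ⟨Λ, hdiag, hlower⟩ := hFGH.exists_dual_eruption_triangular hV hF hG hH hA hi hj hk hijk
    refine ⟨Λ, hdiag, fun ⟨⟨a, b, c⟩, ha, hb, hc, habc⟩ hlt => hlower a b c ha hb hc habc ?_⟩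
    simpa [Prod.Lex.toLex_lt_toLex] using hlt
end

section
/- Let V be an n-dimensional real vector space (n ≥ 2), and let E,F,G,H be complete flags in V such that (E,F,H) and (E,G,H) are transverse triples. Then (H,G,E) and (H,F,E) are also transverse triples, and for every integer 1 ≤ i ≤ n−1: C_i(E,F,G,H) = C_{n−i}(H,G,F,E) and C_i(E,F,G,H) · C_i(E,G,F,H) = 1. -/
/-- `f` (whose values `f 0, …, f (n-1)` matter) is a basis adapted to the flag `F`:
`F l` is the span of `f 0, …, f (l-1)` for all `0 ≤ l ≤ n`. -/
def Adapted (n : ℕ) {V : Type*} [AddCommGroup V] [Module ℝ V]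
    (F : ℕ → Submodule ℝ V) (f : ℕ → V) : Prop :=
  ∀ l, l ≤ n → F l = Submodule.span ℝ (f '' Set.Iio l)

/-- `F^(a) ∧ G^(b) ∧ H^(c) := ω (f 0, …, f (a-1), g 0, …, g (b-1), h 0, …, h (c-1))`,
for `a + b + c = n`. -/
noncomputable def wedge (n : ℕ) {V : Type*} [AddCommGroup V] [Module ℝ V]
    (ω : AlternatingMap ℝ V ℝ (Fin n)) (f g h : ℕ → V) (a b c : ℕ) : ℝ :=
  ω fun l : Fin n =>
    if (l : ℕ) < a then f (l : ℕ)
    else if (l : ℕ) < a + b then g ((l : ℕ) - a)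
    else h ((l : ℕ) - a - b)

/-- The triple ratio `T_{i,j,k}(F,G,H)` computed with adapted bases `f, g, h` of the
flags `F, G, H` and the nonzero alternating `n`-form `ω`. -/
noncomputable def tripleRatio (n : ℕ) {V : Type*} [AddCommGroup V] [Module ℝ V]
    (ω : AlternatingMap ℝ V ℝ (Fin n)) (f g h : ℕ → V) (i j k : ℕ) : ℝ :=
  (wedge n ω f g h (i + 1) j (k - 1) / wedge n ω f g h (i + 1) (j - 1) k) *
  (wedge n ω f g h (i - 1) (j + 1) k / wedge n ω f g h i (j + 1) (k - 1)) *
  (wedge n ω f g h i (j - 1) (k + 1) / wedge n ω f g h (i - 1) j (k + 1))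

/-- The cross ratio `C_i(E,F,G,H)` computed with adapted bases `e, f, g, h` of the
flags `E, F, G, H` and the nonzero alternating `n`-form `ω`. -/
noncomputable def crossRatio (n : ℕ) {V : Type*} [AddCommGroup V] [Module ℝ V]
    (ω : AlternatingMap ℝ V ℝ (Fin n)) (e f g h : ℕ → V) (i : ℕ) : ℝ :=
  (wedge n ω e h g i (n - i - 1) 1 / wedge n ω e h f i (n - i - 1) 1) *
  (wedge n ω e h f (i - 1) (n - i) 1 / wedge n ω e h g (i - 1) (n - i) 1)

/-!
Exchanging the block of `E`-vectors with the block of `H`-vectors in a wedge permutes the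
arguments of `ω`, which only multiplies the wedge by a sign; the sign cancels in each ratio of
the cross ratio, and this gives `C_i(E,F,G,H) = C_{n-i}(H,G,F,E)`. Transversality makes the `n`
vectors of each wedge occurring in the cross ratios span `V`, so these wedges are nonzero and
`C_i(E,G,F,H)` is the reciprocal of `C_i(E,F,G,H)`.
-/

theorem AlternatingMap.map_ne_zero_of_top_le_span {K M ι : Type*} [Field K] [AddCommGroup M]
    [Module K M] [FiniteDimensional K M] [Fintype ι] {ω : M [⋀^ι]→ₗ[K] K} (hω : ω ≠ 0)
    {v : ι → M} (hv : ⊤ ≤ Submodule.span K (Set.range v))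
    (hcard : Fintype.card ι = Module.finrank K M) : ω v ≠ 0 := by
  rw [← coe_basisOfTopLeSpanOfCardEqFinrank v hv hcard]
  exact (ω.map_basis_ne_zero_iff _).2 hω

theorem AlternatingMap.map_perm_div_map_perm {R M ι : Type*} [Field R] [AddCommGroup M]
    [Module R M] [Fintype ι] [DecidableEq ι] (ω : M [⋀^ι]→ₗ[R] R) (σ : Equiv.Perm ι)
    (v w : ι → M) : ω (v ∘ σ) / ω (w ∘ σ) = ω v / ω w := by
  rw [ω.map_perm, ω.map_perm]
  rcases Int.units_eq_one_or (Equiv.Perm.sign σ) with hσ | hσ <;>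
    simp [hσ, neg_div_neg_eq]

section BlockFamily

variable {n : ℕ} {V : Type*}

def blockFamily (n : ℕ) (f g h : ℕ → V) (a b : ℕ) : Fin n → V := fun l =>
  if (l : ℕ) < a then f l else if (l : ℕ) < a + b then g (l - a) else h (l - a - b)

theorem range_blockFamily {f g h : ℕ → V} {a b c : ℕ} (habc : a + b + c = n) :
    Set.range (blockFamily n f g h a b) = f '' Set.Iio a ∪ g '' Set.Iio b ∪ h '' Set.Iio c := by
  ext v
  constructor
  · rintro ⟨l, rfl⟩
    unfold blockFamily
    split_ifs with hla hlb
    · exact .inl (.inl ⟨l, hla, rfl⟩)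
    · exact .inl (.inr ⟨l - a, by simp only [Set.mem_Iio]; omega, rfl⟩)
    · exact .inr ⟨l - a - b, by simp only [Set.mem_Iio]; omega, rfl⟩
  · rintro ((⟨j, hj, rfl⟩ | ⟨j, hj, rfl⟩) | ⟨j, hj, rfl⟩) <;> simp only [Set.mem_Iio] at hj
    · exact ⟨⟨j, by omega⟩, by simp [blockFamily, hj]⟩
    · exact ⟨⟨a + j, by omega⟩, by simp [blockFamily, hj]⟩
    · refine ⟨⟨a + b + j, by omega⟩, ?_⟩
      simp only [blockFamily, if_neg (show ¬ a + b + j < a by omega),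
        if_neg (show ¬ a + b + j < a + b by omega)]
      congr 1
      omega

theorem exists_perm_blockFamily_swap (e h : ℕ → V) {a b : ℕ} (hab : a + b ≤ n) :
    ∃ σ : Equiv.Perm (Fin n),
      ∀ x : ℕ → V, blockFamily n h e x b a = blockFamily n e h x a b ∘ σ := by
  let τ : Fin n → Fin n := fun l =>
    if hl : (l : ℕ) < b then ⟨l + a, by omega⟩
    else if hl' : (l : ℕ) < a + b then ⟨l - b, by omega⟩ else l
  have hτ : Function.Injective τ := by
    intro l m hlm
    simp only [τ] at hlm
    ext
    split_ifs at hlm <;> simp only [Fin.ext_iff] at hlm <;> omega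
  refine ⟨Equiv.ofBijective τ hτ.bijective_of_finite, fun x => funext fun l => ?_⟩
  simp only [blockFamily, Function.comp_apply, Equiv.ofBijective_apply, τ]
  split_ifs <;> simp_all only [not_lt] <;> first | omega | (congr 1; omega)

end BlockFamily

section Flags

variable {n : ℕ} {V : Type*} [AddCommGroup V] [Module ℝ V]

theorem TransverseTriple.symm {F G H : ℕ → Submodule ℝ V} (hT : TransverseTriple n F G H) :
    TransverseTriple n H G F := by
  intro a b c habc
  have := hT c b a (by omega)
  rwa [sup_assoc, sup_comm, sup_comm (G b)] at this

theorem TransverseTriple.swap_right {F G H : ℕ → Submodule ℝ V}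
    (hT : TransverseTriple n F G H) : TransverseTriple n F H G := by
  intro a b c habc
  rw [sup_right_comm]
  exact hT a c b (by omega)

theorem wedge_eq_blockFamily (ω : AlternatingMap ℝ V ℝ (Fin n)) (f g h : ℕ → V)
    (a b c : ℕ) : wedge n ω f g h a b c = ω (blockFamily n f g h a b) :=
  rfl

theorem TransverseTriple.wedge_ne_zero [FiniteDimensional ℝ V]
    (hV : Module.finrank ℝ V = n) {F G H : ℕ → Submodule ℝ V} (hT : TransverseTriple n F G H)
    {f g h : ℕ → V} (hf : Adapted n F f) (hg : Adapted n G g) (hh : Adapted n H h)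
    {ω : AlternatingMap ℝ V ℝ (Fin n)} (hω : ω ≠ 0) (a b c : ℕ) (habc : a + b + c = n) :
    wedge n ω f g h a b c ≠ 0 := by
  rw [wedge_eq_blockFamily]
  refine ω.map_ne_zero_of_top_le_span hω ?_ (by simp [hV])
  rw [range_blockFamily habc, Submodule.span_union, Submodule.span_union,
    ← hf a (by omega), ← hg b (by omega), ← hh c (by omega), hT a b c habc]

theorem wedge_swap_div_wedge_swap (ω : AlternatingMap ℝ V ℝ (Fin n)) (e h x y : ℕ → V)
    {a b : ℕ} (hab : a + b ≤ n) (c : ℕ) :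
    wedge n ω h e x b a c / wedge n ω h e y b a c
      = wedge n ω e h x a b c / wedge n ω e h y a b c := by
  obtain ⟨σ, hσ⟩ := exists_perm_blockFamily_swap e h hab
  simp only [wedge_eq_blockFamily, hσ, ω.map_perm_div_map_perm]

theorem crossRatio_eq_crossRatio_reverse (ω : AlternatingMap ℝ V ℝ (Fin n))
    (e f g h : ℕ → V) {i : ℕ} (hi : i ≤ n) :
    crossRatio n ω e f g h i = crossRatio n ω h g f e (n - i) := by
  rw [crossRatio, crossRatio, Nat.sub_sub_self hi,
    wedge_swap_div_wedge_swap ω e h f g (by omega),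
    wedge_swap_div_wedge_swap ω e h g f (by omega), mul_comm]

theorem crossRatio_mul_crossRatio_swap [FiniteDimensional ℝ V]
    (hV : Module.finrank ℝ V = n) {E F G H : ℕ → Submodule ℝ V}
    (hEFH : TransverseTriple n E F H) (hEGH : TransverseTriple n E G H)
    {ω : AlternatingMap ℝ V ℝ (Fin n)} (hω : ω ≠ 0) {e f g h : ℕ → V}
    (he : Adapted n E e) (hf : Adapted n F f) (hg : Adapted n G g) (hh : Adapted n H h)
    {i : ℕ} (hi₁ : 1 ≤ i) (hi₂ : i < n) :
    crossRatio n ω e f g h i * crossRatio n ω e g f h i = 1 := by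
  have hf₁ := hEFH.swap_right.wedge_ne_zero hV he hh hf hω i (n - i - 1) 1 (by omega)
  have hf₂ := hEFH.swap_right.wedge_ne_zero hV he hh hf hω (i - 1) (n - i) 1 (by omega)
  have hg₁ := hEGH.swap_right.wedge_ne_zero hV he hh hg hω i (n - i - 1) 1 (by omega)
  have hg₂ := hEGH.swap_right.wedge_ne_zero hV he hh hg hω (i - 1) (n - i) 1 (by omega)
  rw [crossRatio, crossRatio]
  field_simp

end Flags

theorem statement14_general (n : ℕ) (V : Type*) [AddCommGroup V] [Module ℝ V]
    [FiniteDimensional ℝ V] (hV : Module.finrank ℝ V = n)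
    (E F G H : ℕ → Submodule ℝ V)
    (hEFH : TransverseTriple n E F H) (hEGH : TransverseTriple n E G H)
    (ω : AlternatingMap ℝ V ℝ (Fin n)) (hω : ω ≠ 0)
    (e f g h : ℕ → V)
    (he : Adapted n E e) (hf : Adapted n F f) (hg : Adapted n G g) (hh : Adapted n H h) :
    TransverseTriple n H G E ∧ TransverseTriple n H F E ∧
    ∀ i : ℕ, 1 ≤ i → i < n →
      crossRatio n ω e f g h i = crossRatio n ω h g f e (n - i) ∧
      crossRatio n ω e f g h i * crossRatio n ω e g f h i = 1 :=
  ⟨hEGH.symm, hEFH.symm, fun _ hi₁ hi₂ =>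
    ⟨crossRatio_eq_crossRatio_reverse ω e f g h hi₂.le,
      crossRatio_mul_crossRatio_swap hV hEFH hEGH hω he hf hg hh hi₁ hi₂⟩⟩

theorem statement14 (n : ℕ) (hn : 2 ≤ n) (V : Type*) [AddCommGroup V] [Module ℝ V]
    [FiniteDimensional ℝ V] (hV : Module.finrank ℝ V = n)
    (E F G H : ℕ → Submodule ℝ V)
    (hE : IsFlag n E) (hF : IsFlag n F) (hG : IsFlag n G) (hH : IsFlag n H)
    (hEFH : TransverseTriple n E F H) (hEGH : TransverseTriple n E G H)
    (ω : AlternatingMap ℝ V ℝ (Fin n)) (hω : ω ≠ 0)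
    (e f g h : ℕ → V)
    (he : Adapted n E e) (hf : Adapted n F f) (hg : Adapted n G g) (hh : Adapted n H h) :
    TransverseTriple n H G E ∧ TransverseTriple n H F E ∧
    ∀ i : ℕ, 1 ≤ i → i < n →
      crossRatio n ω e f g h i = crossRatio n ω h g f e (n - i) ∧
      crossRatio n ω e f g h i * crossRatio n ω e g f h i = 1 :=
  statement14_general n V hV E F G H hEFH hEGH ω hω e f g h he hf hg hh
end
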